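/- For positive integers m, n and a ∈ ℂ* with a^{4mn−1} = 1 and a ≠ 1, the determinant of the 4×4 block matrix [[δ_{m−1}(a)·[[−1, t a^{1−m}],[−t, −a^{1−m}]], [[a^{−m},0],[0,a^m]]], [[[0, t a^{2mn}],[−t a^{−2mn}, 0]], δ_{n−1}(a^{2m})·[[a^{−2mn}, −t a^{2m}],[t a^{−2mn}, a^{2m}]]]] equals a^{1+m−2mn}(δ_{m−1}(a)δ_{n−1}(a^{2m}))^2 (t^2+1)^2, as a polynomial identity in t. -/

import Mathlib

/-- δ_k(b) = 1 + b + ... + b^k -/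
noncomputable def delta (k : ℕ) (b : ℂ) : ℂ := ∑ i ∈ Finset.range (k + 1), b ^ i

/-!
Write `x = a ^ m`, `y = a ^ (2mn)`, so that `y² = a` and, telescoping the geometric sums,
`(a - 1) δ_{m-1}(a) (x + 1) δ_{n-1}(a^{2m}) (y + 1) = a^{4mn} - 1 = a - 1`, i.e.
`δ_{m-1}(a) δ_{n-1}(a^{2m}) = ((x + 1)(y + 1))⁻¹`. The two diagonal blocks enter the
determinant only through the product of these sums, and with this relation the Laplace expansion
collapses to `x y (δ_{m-1}(a) δ_{n-1}(a^{2m}))² (t² + 1)²`.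
-/

theorem sq_pow_eq_self_of_pow_eq_one {M : Type*} [Monoid M] {a : M} {k : ℕ} (hk : 0 < k)
    (h : a ^ (2 * k - 1) = 1) : (a ^ k) ^ 2 = a := by
  rw [← pow_mul, mul_comm, ← Nat.sub_add_cancel (by omega : 1 ≤ 2 * k), pow_succ, h, one_mul]

theorem delta_mul_sub_one (k : ℕ) (b : ℂ) : delta k b * (b - 1) = b ^ (k + 1) - 1 :=
  geom_sum_mul b (k + 1)

theorem delta_mul_delta_mul_eq_one {m n : ℕ} (hm : 0 < m) (hn : 0 < n) {a : ℂ} (ha1 : a ≠ 1)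
    (hya : (a ^ (2 * m * n)) ^ 2 = a) :
    delta (m - 1) a * delta (n - 1) (a ^ (2 * m)) * ((a ^ m + 1) * (a ^ (2 * m * n) + 1)) = 1 := by
  have hD := delta_mul_sub_one (m - 1) a
  have hE := delta_mul_sub_one (n - 1) (a ^ (2 * m))
  rw [Nat.sub_add_cancel hm] at hD
  rw [Nat.sub_add_cancel hn, ← pow_mul] at hE
  apply mul_right_cancel₀ (sub_ne_zero.mpr ha1)
  linear_combination delta (n - 1) (a ^ (2 * m)) * (a ^ m + 1) * (a ^ (2 * m * n) + 1) * hD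
    + (a ^ (2 * m * n) + 1) * hE + hya
    - delta (n - 1) (a ^ (2 * m)) * (a ^ (2 * m * n) + 1) * pow_mul' a 2 m

theorem det_fox_block_of_mul_eq_one {F : Type*} [Field F] (a D E x y t : F)
    (hx : x ≠ 0) (hy : y ≠ 0) (hya : y ^ 2 = a) (hDE : D * E * ((x + 1) * (y + 1)) = 1) :
    Matrix.det !![D * (-1), D * (t * (a * x⁻¹)), x⁻¹, 0;
      D * (-t), D * (-(a * x⁻¹)), 0, x;
      0, t * y, E * y⁻¹, E * (-(t * x ^ 2));
      -(t * y⁻¹), 0, E * (t * y⁻¹), E * x ^ 2]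
      = x * y * (D * E) ^ 2 * (t ^ 2 + 1) ^ 2 := by
  subst hya
  rw [Matrix.det_succ_row_zero, Fin.sum_univ_four]
  simp only [Matrix.det_fin_three, Matrix.submatrix_apply, Matrix.of_apply, Matrix.cons_val,
    Fin.succAbove, Fin.reduceSucc, Fin.reduceCastSucc, Fin.reduceLT, ↓reduceIte, Fin.val_zero,
    Fin.val_one, Fin.val_two]
  field_simp
  linear_combination (-x * y * t ^ 2) * hDE

theorem fox_jacobian_det (m n : ℕ) (hm : 0 < m) (hn : 0 < n) (a : ℂ)
    (ha : a ^ (4 * m * n - 1) = 1) (ha1 : a ≠ 1) (t : ℂ) :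
    Matrix.det
      !![delta (m - 1) a * (-1), delta (m - 1) a * (t * a ^ (1 - (m : ℤ))),
           a ^ (-(m : ℤ)), 0;
         delta (m - 1) a * (-t), delta (m - 1) a * (-(a ^ (1 - (m : ℤ)))),
           0, a ^ m;
         0, t * a ^ (2 * m * n),
           delta (n - 1) (a ^ (2 * m)) * (a ^ (-(2 * (m : ℤ) * n))),
           delta (n - 1) (a ^ (2 * m)) * (-(t * a ^ (2 * m)));
         -(t * a ^ (-(2 * (m : ℤ) * n))), 0,
           delta (n - 1) (a ^ (2 * m)) * (t * a ^ (-(2 * (m : ℤ) * n))),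
           delta (n - 1) (a ^ (2 * m)) * (a ^ (2 * m))]
      = a ^ (1 + (m : ℤ) - 2 * m * n) *
          (delta (m - 1) a * delta (n - 1) (a ^ (2 * m))) ^ 2 * (t ^ 2 + 1) ^ 2 := by
  have hpos : 4 * m * n - 1 ≠ 0 := by
    have := Nat.mul_pos hm hn
    rw [mul_assoc]; omega
  have ha0 : a ≠ 0 := ne_zero_pow hpos (by rw [ha]; exact one_ne_zero)
  have hya : (a ^ (2 * m * n)) ^ 2 = a :=
    sq_pow_eq_self_of_pow_eq_one (by positivity) (by rwa [← mul_assoc, ← mul_assoc])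
  have hneg_m : a ^ (-(m : ℤ)) = (a ^ m)⁻¹ := by rw [zpow_neg, zpow_natCast]
  have hone_sub_m : a ^ (1 - (m : ℤ)) = a * (a ^ m)⁻¹ := by
    rw [zpow_sub₀ ha0, zpow_one, zpow_natCast, div_eq_mul_inv]
  have hneg_2mn : a ^ (-(2 * (m : ℤ) * n)) = (a ^ (2 * m * n))⁻¹ := by
    rw [zpow_neg]; norm_cast
  have hexponent : a ^ (1 + (m : ℤ) - 2 * m * n) = a ^ m * a ^ (2 * m * n) := by
    rw [zpow_sub₀ ha0, zpow_add₀ ha0, zpow_one, div_eq_iff (zpow_ne_zero _ ha0)]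
    norm_cast
    linear_combination -(a ^ m) * hya
  set D := delta (m - 1) a
  set E := delta (n - 1) (a ^ (2 * m))
  rw [hneg_m, hone_sub_m, hneg_2mn, hexponent, pow_mul' a 2 m]
  exact det_fox_block_of_mul_eq_one a D E _ _ t (pow_ne_zero _ ha0) (pow_ne_zero _ ha0) hya
    (delta_mul_delta_mul_eq_one hm hn ha1 hya)
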